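/- Let R be a semiprime ring, K and L Lie ideals of R, and m, n positive integers. If [K^m, L^n] = 0, then [K, L] = 0. -/

import Mathlib

/-!
Fix `κ` commuting with `L^(k+1)` and put `M = L^k` (`k ≥ 1`), again a Lie ideal. Then `κ` commutes
with all `σ * μ` and `μ * σ` (`σ ∈ M`, `μ ∈ L`), and an explicit identity in the free ring writes
`(⁅κ, σ⁆ * μ) * x * (⁅κ, σ⁆ * μ)` as a combination of such commutators, so `⁅κ, σ⁆ * μ = 0` by
semiprimeness. Hence `a = ⁅κ, σ⁆ ∈ M` left-annihilates `L` and therefore `M`; since `⁅a, x⁆ ∈ M`,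
`a * x * a = a * a * x - a * ⁅a, x⁆ = 0`, so `a = 0`. Descending in `k`, whatever commutes with
`L^n` commutes with `L`. Applied first to `L` and then to `K`, this turns `[K^m, L^n] = 0` into
`[K^m, L] = 0` and then `[K, L] = 0`.
-/

/-- The additive subgroup generated by commutators `a*b - b*a` with `a ∈ A`, `b ∈ B`. -/
def commSG (R : Type*) [NonUnitalRing R] (A B : Set R) : AddSubgroup R :=
  AddSubgroup.closure {x | ∃ a ∈ A, ∃ b ∈ B, x = a * b - b * a}

/-- The additive subgroup generated by products `a*b` with `a ∈ A`, `b ∈ B`. -/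
def prodSG (R : Type*) [NonUnitalRing R] (A B : Set R) : AddSubgroup R :=
  AddSubgroup.closure {x | ∃ a ∈ A, ∃ b ∈ B, x = a * b}

/-- `L` is a Lie ideal of `R`. -/
def IsLieIdeal (R : Type*) [NonUnitalRing R] (L : AddSubgroup R) : Prop :=
  ∀ a ∈ L, ∀ r : R, a * r - r * a ∈ L

/-- `sgPow R L n` is the additive subgroup `L^(n+1)` generated by products of `n+1`
elements of `L`. -/
def sgPow (R : Type*) [NonUnitalRing R] (L : AddSubgroup R) : ℕ → AddSubgroup R
  | 0 => L
  | n + 1 => prodSG R (sgPow R L n) L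

/-- `R` is a semiprime ring. -/
def IsSemiprimeRing (R : Type*) [NonUnitalRing R] : Prop :=
  ∀ a : R, (∀ x : R, a * x * a = 0) → a = 0

/-- `R` is a prime ring. -/
def IsPrimeRing (R : Type*) [NonUnitalRing R] : Prop :=
  ∀ a b : R, (∀ x : R, a * x * b = 0) → a = 0 ∨ b = 0

local notation "⁅" a ", " b "⁆ᵣ" => a * b - b * a

section

variable {R : Type*} [NonUnitalRing R]

lemma prodSG_le_iff {A B : Set R} {H : AddSubgroup R} :
    prodSG R A B ≤ H ↔ ∀ a ∈ A, ∀ b ∈ B, a * b ∈ H := by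
  simp only [prodSG, AddSubgroup.closure_le, Set.subset_def, Set.mem_ofPred_eq]
  exact ⟨fun h a ha b hb => h _ ⟨a, ha, b, hb, rfl⟩,
    by rintro h _ ⟨a, ha, b, hb, rfl⟩; exact h a ha b hb⟩

lemma mul_mem_prodSG {A B : Set R} {a b : R} (ha : a ∈ A) (hb : b ∈ B) :
    a * b ∈ prodSG R A B :=
  prodSG_le_iff.mp le_rfl a ha b hb

lemma isLieIdeal_sgPow {L : AddSubgroup R} (hL : IsLieIdeal R L) (j : ℕ) :
    IsLieIdeal R (sgPow R L j) := by
  induction j with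
  | zero => exact hL
  | succ j ih =>
    intro y hy r
    let ad : R →+ R := AddMonoidHom.mulRight r - AddMonoidHom.mulLeft r
    refine (prodSG_le_iff (H := (sgPow R L (j + 1)).comap ad)).mpr
      (fun σ hσ μ hμ => ?_) hy
    have hσμ : ⁅σ * μ, r⁆ᵣ = σ * ⁅μ, r⁆ᵣ + ⁅σ, r⁆ᵣ * μ := by noncomm_ring
    show ⁅σ * μ, r⁆ᵣ ∈ sgPow R L (j + 1)
    rw [hσμ]
    exact add_mem (mul_mem_prodSG hσ (hL μ hμ r)) (mul_mem_prodSG (ih σ hσ r) hμ)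

lemma mul_mem_sgPow_succ {L : AddSubgroup R} {μ y : R} (hμ : μ ∈ L) {j : ℕ}
    (hy : y ∈ sgPow R L j) : μ * y ∈ sgPow R L (j + 1) := by
  induction j generalizing y with
  | zero => exact mul_mem_prodSG hμ hy
  | succ j ih =>
    refine (prodSG_le_iff (H := (sgPow R L (j + 2)).comap (AddMonoidHom.mulLeft μ))).mpr
      (fun σ hσ ν hν => ?_) hy
    show μ * (σ * ν) ∈ sgPow R L (j + 2)
    rw [← mul_assoc]
    exact mul_mem_prodSG (ih hσ) hν

lemma mul_eq_zero_of_mem_sgPow {L : AddSubgroup R} {a : R} (ha : ∀ μ ∈ L, a * μ = 0)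
    (j : ℕ) : ∀ y ∈ sgPow R L j, a * y = 0 := by
  induction j with
  | zero => exact ha
  | succ j ih =>
    intro y hy
    refine (prodSG_le_iff (H := (AddMonoidHom.mulLeft a).ker)).mpr (fun σ hσ μ hμ => ?_) hy
    show a * (σ * μ) = 0
    rw [← mul_assoc, ih σ hσ, zero_mul]

lemma commutator_mul_mul_self_eq_zero {M L : AddSubgroup R} (hM : IsLieIdeal R M)
    (hL : IsLieIdeal R L) {κ : R} (hML : ∀ σ ∈ M, ∀ μ ∈ L, Commute κ (σ * μ))
    (hLM : ∀ σ ∈ M, ∀ μ ∈ L, Commute κ (μ * σ)) {σ μ : R} (hσ : σ ∈ M) (hμ : μ ∈ L) (x : R) :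
    ⁅κ, σ⁆ᵣ * μ * x * (⁅κ, σ⁆ᵣ * μ) = 0 := by
  have hc : ∀ {y : R}, Commute κ y → ⁅κ, y⁆ᵣ = 0 := fun h => sub_eq_zero.mpr h
  -- Every commutator `⁅κ, _⁆ᵣ` on the right lies in `⁅κ, M * L⁆` or `⁅κ, L * M⁆`, built from
  -- `σ`, `⁅σ, μ⁆ᵣ ∈ M` and `μ`, `⁅μ, r⁆ᵣ ∈ L` for `r ∈ {κ, x, x * σ, x * κ, κ * μ}`.
  have key : ⁅κ, σ⁆ᵣ * μ * x * (⁅κ, σ⁆ᵣ * μ) =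
      σ*x*μ*⁅κ, σ*μ⁆ᵣ*κ + σ*μ*x*⁅κ, σ*⁅μ, κ⁆ᵣ⁆ᵣ - σ*μ*x*⁅κ, σ*μ⁆ᵣ*κ + ⁅κ, σ*⁅μ, x*σ⁆ᵣ⁆ᵣ*μ*κ
      + σ*x*⁅κ, σ*μ⁆ᵣ*μ*κ + σ*x*κ*⁅κ, ⁅σ, μ⁆ᵣ*μ⁆ᵣ - σ*x*⁅κ, σ*μ⁆ᵣ*κ*μ - σ*x*κ*⁅κ, σ*μ⁆ᵣ*μ
      + σ*⁅κ, ⁅μ, x⁆ᵣ*σ⁆ᵣ*κ*μ + σ*x*⁅κ, μ*σ⁆ᵣ*κ*μ - σ*⁅κ, ⁅μ, x*κ⁆ᵣ*σ⁆ᵣ*μ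
      + ⁅κ, σ*⁅μ, x*κ⁆ᵣ⁆ᵣ*σ*μ - σ*x*κ*μ*⁅κ, σ*μ⁆ᵣ - σ*x*⁅κ, ⁅μ, κ*μ⁆ᵣ*σ⁆ᵣ + σ*x*κ*μ*⁅κ, μ*σ⁆ᵣ
      - σ*x*⁅κ, μ*⁅σ, μ⁆ᵣ⁆ᵣ*κ - σ*x*μ*⁅κ, μ*σ⁆ᵣ*κ + σ*x*μ*κ*⁅κ, σ*μ⁆ᵣ - ⁅κ, σ*⁅μ, x⁆ᵣ⁆ᵣ*κ*σ*μ
      + σ*x*κ*⁅κ, μ*⁅σ, μ⁆ᵣ⁆ᵣ - σ*κ*x*⁅κ, μ*σ⁆ᵣ*μ - ⁅κ, σ*⁅μ, x*σ⁆ᵣ⁆ᵣ*κ*μ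
      - κ*σ*x*⁅κ, ⁅σ, μ⁆ᵣ*μ⁆ᵣ - κ*σ*x*μ*⁅κ, σ*μ⁆ᵣ + κ*σ*x*⁅κ, σ*μ⁆ᵣ*μ + κ*σ*μ*x*⁅κ, σ*μ⁆ᵣ := by
    noncomm_ring
  rw [key, hc (hML σ hσ μ hμ), hc (hML σ hσ _ (hL μ hμ κ)),
    hc (hML σ hσ _ (hL μ hμ (x * σ))), hc (hML _ (hM σ hσ μ) μ hμ),
    hc (hLM σ hσ _ (hL μ hμ x)), hc (hLM σ hσ μ hμ),
    hc (hLM σ hσ _ (hL μ hμ (x * κ))), hc (hML σ hσ _ (hL μ hμ (x * κ))),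
    hc (hLM σ hσ _ (hL μ hμ (κ * μ))), hc (hLM _ (hM σ hσ μ) μ hμ),
    hc (hML σ hσ _ (hL μ hμ x))]
  simp

namespace IsSemiprimeRing

lemma commutator_mul_eq_zero (hR : IsSemiprimeRing R) {M L : AddSubgroup R}
    (hM : IsLieIdeal R M) (hL : IsLieIdeal R L) {κ : R}
    (hML : ∀ σ ∈ M, ∀ μ ∈ L, Commute κ (σ * μ)) (hLM : ∀ σ ∈ M, ∀ μ ∈ L, Commute κ (μ * σ))
    {σ μ : R} (hσ : σ ∈ M) (hμ : μ ∈ L) : ⁅κ, σ⁆ᵣ * μ = 0 :=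
  hR _ (commutator_mul_mul_self_eq_zero hM hL hML hLM hσ hμ)

lemma eq_zero_of_forall_mul_eq_zero (hR : IsSemiprimeRing R) {M : AddSubgroup R}
    (hM : IsLieIdeal R M) {a : R} (ha : a ∈ M) (h : ∀ y ∈ M, a * y = 0) : a = 0 := by
  refine hR a fun x => ?_
  calc a * x * a = a * a * x - a * ⁅a, x⁆ᵣ := by noncomm_ring
    _ = 0 := by rw [h a ha, h _ (hM a ha x), zero_mul, sub_zero]

lemma commute_of_forall_commute_sgPow_succ (hR : IsSemiprimeRing R) {L : AddSubgroup R}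
    (hL : IsLieIdeal R L) {κ : R} {j : ℕ} (h : ∀ y ∈ sgPow R L (j + 1), Commute κ y) :
    ∀ σ ∈ sgPow R L j, Commute κ σ := by
  intro σ hσ
  have hM := isLieIdeal_sgPow hL j
  have hmem : ⁅κ, σ⁆ᵣ ∈ sgPow R L j := by
    rw [← neg_sub]
    exact neg_mem (hM σ hσ κ)
  have hann : ∀ μ ∈ L, ⁅κ, σ⁆ᵣ * μ = 0 := fun μ hμ =>
    hR.commutator_mul_eq_zero hM hL (fun σ hσ μ hμ => h _ (mul_mem_prodSG hσ hμ))
      (fun σ hσ μ hμ => h _ (mul_mem_sgPow_succ hμ hσ)) hσ hμ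
  exact sub_eq_zero.mp
    (hR.eq_zero_of_forall_mul_eq_zero hM hmem (mul_eq_zero_of_mem_sgPow hann j))

lemma commute_of_forall_commute_sgPow (hR : IsSemiprimeRing R) {L : AddSubgroup R}
    (hL : IsLieIdeal R L) {κ : R} {j : ℕ} (h : ∀ y ∈ sgPow R L j, Commute κ y) :
    ∀ y ∈ L, Commute κ y := by
  induction j with
  | zero => exact h
  | succ j ih => exact ih (hR.commute_of_forall_commute_sgPow_succ hL h)

end IsSemiprimeRing

end

theorem stmt9_general (R : Type*) [NonUnitalRing R] (hR : IsSemiprimeRing R)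
    (K L : AddSubgroup R) (hK : IsLieIdeal R K) (hL : IsLieIdeal R L)
    (m n : ℕ)
    (h : ∀ x ∈ sgPow R K (m - 1), ∀ y ∈ sgPow R L (n - 1), x * y = y * x) :
    ∀ x ∈ K, ∀ y ∈ L, x * y = y * x := by
  have hKmL : ∀ x ∈ sgPow R K (m - 1), ∀ y ∈ L, Commute x y :=
    fun x hx => hR.commute_of_forall_commute_sgPow hL (h x hx)
  intro x hx y hy
  exact (hR.commute_of_forall_commute_sgPow hK (fun x hx => (hKmL x hx y hy).symm) x hx).symm

/-- in a semiprime ring, [K^m, L^n] = 0 implies [K, L] = 0. -/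
theorem stmt9 (R : Type*) [NonUnitalRing R] (hR : IsSemiprimeRing R)
    (K L : AddSubgroup R) (hK : IsLieIdeal R K) (hL : IsLieIdeal R L)
    (m n : ℕ) (hm : 1 ≤ m) (hn : 1 ≤ n)
    (h : ∀ x ∈ sgPow R K (m - 1), ∀ y ∈ sgPow R L (n - 1), x * y = y * x) :
    ∀ x ∈ K, ∀ y ∈ L, x * y = y * x :=
  stmt9_general R hR K L hK hL m n h
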